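/- Fix an integer n ≥ 1, set N = 2n + 3, and let V, F, the Verlinde product, and the structure constants N_{ab}^c be as defined. Then for all integers a, b with 0 ≤ b ≤ a ≤ n and every integer c with n < c ≤ a + b and a + b + c even, one has N_{ab}^{2n+1−c} = −1 (note that 1 ≤ 2n+1−c ≤ n). In particular, whenever a + b > n the product e_a · e_b has at least one strictly negative structure constant. -/

import Mathlib

open BigOperators

/-- The folding map `F : ℕ → V` for type `A₂⁽²⁾` at level `2n`, where
`V = Fin (n+1) → ℤ` is the free ℤ-module with basis `e₀, …, e_n` and
`N = 2n + 3`:  `F m = e_{m'}` if `m ≡ m' (mod N)` with `0 ≤ m' ≤ n`;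
`F m = 0` if `m ≡ N - 1 (mod N)`; `F m = -e_{m'}` if `m + m' + 2 ≡ 0 (mod N)`
with `0 ≤ m' ≤ n`. -/
def foldA2 (n m : ℕ) : Fin (n + 1) → ℤ :=
  if h : m % (2 * n + 3) ≤ n then
    Pi.single (⟨m % (2 * n + 3), by omega⟩ : Fin (n + 1)) 1
  else if h2 : m % (2 * n + 3) = 2 * n + 2 then 0
  else - Pi.single (⟨2 * n + 1 - m % (2 * n + 3), by omega⟩ : Fin (n + 1)) 1

/-- The basis vector `e_m` of `V = Fin (n+1) → ℤ` (zero if `m > n`). -/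
def eN (n m : ℕ) : Fin (n + 1) → ℤ :=
  if h : m ≤ n then Pi.single (⟨m, by omega⟩ : Fin (n + 1)) 1 else 0

/-- The Verlinde product on `V = Fin (n+1) → ℤ`: the ℤ-bilinear product with
`e_a · e_b = ∑_{i=0}^{min a b} F (a + b - 2 i)`. -/
def vmul (n : ℕ) (x y : Fin (n + 1) → ℤ) : Fin (n + 1) → ℤ :=
  fun c => ∑ a : Fin (n + 1), ∑ b : Fin (n + 1),
    x a * y b * (∑ i ∈ Finset.range (min a.1 b.1 + 1), foldA2 n (a.1 + b.1 - 2 * i)) c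

/-- The structure constants `N_{ab}^c` of the Verlinde product, defined by
`e_a · e_b = ∑_c N_{ab}^c e_c`. -/
def Nconst (n a b c : ℕ) : ℤ :=
  if h : c ≤ n then vmul n (eN n a) (eN n b) ⟨c, by omega⟩ else 0

/- Since `a + b ≤ 2n`, every Clebsch–Gordan term `m = a + b - 2i` of `e_a · e_b` lies in `[0, 2n]`,
so the folding either keeps it (`m ≤ n`) or reflects it once to `-e_{2n+1-m}` (`m > n`). The
coefficient of `e_{2n+1-c}` for `c > n` therefore receives `-1` from the unique term `m = c`, and
nothing from the unreflected term `m = 2n+1-c`, which has the wrong parity. -/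

lemma foldA2_of_le {n m : ℕ} (hm : m ≤ n) :
    foldA2 n m = Pi.single (⟨m, by omega⟩ : Fin (n + 1)) 1 := by
  have hmod : m % (2 * n + 3) = m := Nat.mod_eq_of_lt (by omega)
  simp only [foldA2, hmod, dif_pos hm]

lemma foldA2_of_lt_of_le {n m : ℕ} (hnm : n < m) (hm : m ≤ 2 * n + 1) :
    foldA2 n m = -Pi.single (⟨2 * n + 1 - m, by omega⟩ : Fin (n + 1)) 1 := by
  have hmod : m % (2 * n + 3) = m := Nat.mod_eq_of_lt (by omega)
  simp only [foldA2, hmod, dif_neg (show ¬m ≤ n by omega), dif_neg (show m ≠ 2 * n + 2 by omega)]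

lemma foldA2_apply_reflect {n m c : ℕ} (hm : m ≤ 2 * n + 1) (hnc : n < c) (hc : c ≤ 2 * n + 1)
    (hpar : (m + c) % 2 = 0) :
    foldA2 n m ⟨2 * n + 1 - c, by omega⟩ = if m = c then -1 else 0 := by
  rcases Nat.lt_or_ge n m with hnm | hmn
  · rw [foldA2_of_lt_of_le hnm hm, Pi.neg_apply, Pi.single_apply]
    by_cases hmc : m = c
    · simp [hmc]
    · rw [if_neg (by simp only [Fin.mk.injEq]; omega), if_neg hmc, neg_zero]
  · rw [foldA2_of_le hmn, Pi.single_apply, if_neg (by simp only [Fin.mk.injEq]; omega),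
      if_neg (by omega)]

lemma eN_of_le {n m : ℕ} (hm : m ≤ n) : eN n m = Pi.single (⟨m, by omega⟩ : Fin (n + 1)) 1 :=
  dif_pos hm

lemma vmul_eN_eN {n a b : ℕ} (ha : a ≤ n) (hb : b ≤ n) :
    vmul n (eN n a) (eN n b) = ∑ i ∈ Finset.range (min a b + 1), foldA2 n (a + b - 2 * i) := by
  ext c
  simp only [vmul, eN_of_le ha, eN_of_le hb, Pi.single_apply, ite_mul, one_mul, zero_mul]
  rw [Fintype.sum_eq_single (⟨a, by omega⟩ : Fin (n + 1)) (by intro x hx; simp [hx]),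
    Fintype.sum_eq_single (⟨b, by omega⟩ : Fin (n + 1)) (by intro x hx; simp [hx]),
    if_pos rfl, if_pos rfl, Finset.sum_apply]

lemma sum_foldA2_apply_reflect {n a b c : ℕ} (hb : b ≤ a) (ha : a ≤ n) (hnc : n < c)
    (hc : c ≤ a + b) (hpar : (a + b + c) % 2 = 0) :
    ∑ i ∈ Finset.range (min a b + 1), foldA2 n (a + b - 2 * i) ⟨2 * n + 1 - c, by omega⟩
      = -1 := by
  rw [min_eq_right hb]
  have hterm : ∀ i ∈ Finset.range (b + 1),
      foldA2 n (a + b - 2 * i) ⟨2 * n + 1 - c, by omega⟩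
        = if i = (a + b - c) / 2 then (-1 : ℤ) else 0 := by
    intro i hi
    rw [Finset.mem_range] at hi
    rw [foldA2_apply_reflect (by omega) hnc (by omega) (by omega)]
    exact if_congr (by omega) rfl rfl
  rw [Finset.sum_congr rfl hterm, Finset.sum_ite_eq' (Finset.range (b + 1)) _ (fun _ => (-1 : ℤ)),
    if_pos (Finset.mem_range.mpr (by omega))]

lemma Nconst_reflect_eq_neg_one {n a b c : ℕ} (hb : b ≤ a) (ha : a ≤ n) (hnc : n < c)
    (hc : c ≤ a + b) (hpar : (a + b + c) % 2 = 0) :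
    Nconst n a b (2 * n + 1 - c) = -1 := by
  rw [Nconst, dif_pos (by omega), vmul_eN_eN ha (hb.trans ha), Finset.sum_apply]
  exact sum_foldA2_apply_reflect hb ha hnc hc hpar

theorem Nconst_negative_general (n : ℕ) :
    (∀ a b c : ℕ, b ≤ a → a ≤ n → n < c → c ≤ a + b → (a + b + c) % 2 = 0 →
      (1 ≤ 2 * n + 1 - c ∧ 2 * n + 1 - c ≤ n) ∧ Nconst n a b (2 * n + 1 - c) = -1) ∧
    (∀ a b : ℕ, b ≤ a → a ≤ n → n < a + b →
      ∃ c : ℕ, c ≤ n ∧ Nconst n a b c < 0) := by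
  refine ⟨fun a b c hb ha hnc hc hpar =>
      ⟨⟨by omega, by omega⟩, Nconst_reflect_eq_neg_one hb ha hnc hc hpar⟩,
    fun a b hb ha hab => ⟨2 * n + 1 - (a + b), by omega, ?_⟩⟩
  rw [Nconst_reflect_eq_neg_one hb ha hab le_rfl (by omega)]
  norm_num

/-- Negative structure constants in the Verlinde algebra of type `A₂⁽²⁾` at even
level `2n`: for `0 ≤ b ≤ a ≤ n` and `n < c ≤ a + b` with `a + b + c` even, one
has `N_{ab}^{2n+1-c} = -1` (and `1 ≤ 2n+1-c ≤ n`).  In particular, whenever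
`a + b > n` the product `e_a · e_b` has a strictly negative structure
constant. -/
theorem Nconst_negative (n : ℕ) (hn : 1 ≤ n) :
    (∀ a b c : ℕ, b ≤ a → a ≤ n → n < c → c ≤ a + b → (a + b + c) % 2 = 0 →
      (1 ≤ 2 * n + 1 - c ∧ 2 * n + 1 - c ≤ n) ∧ Nconst n a b (2 * n + 1 - c) = -1) ∧
    (∀ a b : ℕ, b ≤ a → a ≤ n → n < a + b →
      ∃ c : ℕ, c ≤ n ∧ Nconst n a b c < 0) :=
  Nconst_negative_general n
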